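/- Let S be a k-shredder of G captured in the following sense: x is a vertex in a component of G \ S other than the largest-volume component C, and Π is a set of k openly-disjoint simple paths from x each ending at a vertex of C. Then no bridge of Π straddles S. -/

import Mathlib

open SimpleGraph

variable {V : Type*}

/-- The graph `G` with the vertices of `S` removed (vertices in `S` become isolated). -/
def delAdj (G : SimpleGraph V) (S : Set V) : SimpleGraph V where
  Adj u v := G.Adj u v ∧ u ∉ S ∧ v ∉ S
  symm := ⟨fun u v ⟨h, hu, hv⟩ => ⟨h.symm, hv, hu⟩⟩
  loopless := ⟨fun v h => G.loopless.irrefl v h.1⟩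

/-- The subgraph of `G` induced on the vertex set `A` (other vertices become isolated). -/
def restrict (G : SimpleGraph V) (A : Set V) : SimpleGraph V where
  Adj u v := G.Adj u v ∧ u ∈ A ∧ v ∈ A
  symm := ⟨fun u v ⟨h, hu, hv⟩ => ⟨h.symm, hv, hu⟩⟩
  loopless := ⟨fun v h => G.loopless.irrefl v h.1⟩

/-- `C` is a connected component of `G \ S`. -/
def IsComp (G : SimpleGraph V) (S C : Set V) : Prop :=
  ∃ v, v ∉ S ∧ C = {u | (delAdj G S).Reachable v u}

/-- The number of connected components of `G \ S`. -/
noncomputable def numComp (G : SimpleGraph V) (S : Set V) : ℕ :=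
  {C : Set V | IsComp G S C}.ncard

/-- The volume of a vertex set `Q`: the number of edges with at least one endpoint in `Q`. -/
noncomputable def vol (G : SimpleGraph V) (Q : Set V) : ℕ :=
  {e ∈ G.edgeSet | ∃ v ∈ Q, v ∈ e}.ncard

/-- `S` is a `k`-shredder: it has `k` vertices and `G \ S` has at least three components. -/
def IsShredder (G : SimpleGraph V) (k : ℕ) (S : Set V) : Prop :=
  S.ncard = k ∧ 3 ≤ numComp G S

/-- `G` is `k`-vertex-connected: it has more than `k` vertices and stays connected
after removing any set of fewer than `k` vertices. -/
def KConnected (G : SimpleGraph V) (k : ℕ) [Fintype V] : Prop :=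
  k < Fintype.card V ∧
    ∀ S : Set V, S.ncard < k → ∀ u v, u ∉ S → v ∉ S → (delAdj G S).Reachable u v

/-- `u` is an ancestor of `v` (or equal to it) in the tree `T` rooted at `r`:
every walk from the root to `v` passes through `u`. -/
def AncOf (T : SimpleGraph V) (r u v : V) : Prop :=
  ∀ p : T.Walk r v, u ∈ p.support

/-- `IsDFSTree G W r T` : `T` is a spanning tree of the induced graph `G[W]` that can be
produced by a depth-first search from `r ∈ W`:  DFS picks a neighbor `w` of `r`, recursively
explores the whole component of `w` in `G[W \ {r}]`, and then continues from `r` on the rest. -/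
inductive IsDFSTree (G : SimpleGraph V) : Set V → V → SimpleGraph V → Prop
  | single (r : V) : IsDFSTree G {r} r ⊥
  | step (W : Set V) (r w : V) (T₁ T₂ : SimpleGraph V)
      (hr : r ∈ W) (hw : w ∈ W) (hadj : G.Adj r w)
      (hT₁ : IsDFSTree G {u | (restrict G (W \ {r})).Reachable w u} w T₁)
      (hT₂ : IsDFSTree G (W \ {u | (restrict G (W \ {r})).Reachable w u}) r T₂) :
      IsDFSTree G W r (T₁ ⊔ T₂ ⊔ fromEdgeSet {s(r, w)})

/-- `C` is an internal component of `T \ U`: a component whose root (its vertex closest to the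
root `r` of `T`, i.e. the vertex of `C` that is an ancestor of all of `C`) is an ancestor of
some vertex of `U`. -/
def InternalComp (T : SimpleGraph V) (r : V) (U C : Set V) : Prop :=
  IsComp T U C ∧ ∃ ρ ∈ C, (∀ v ∈ C, AncOf T r ρ v) ∧ ∃ u ∈ U, AncOf T r ρ u

/-- `Straddles sup A S`: the set `A` (attachments of a bridge, or a candidate) straddles `S`
with respect to the paths whose supports are `sup i`: on some path an `A`-vertex strictly
precedes an `S`-vertex, and on some path an `A`-vertex strictly succeeds an `S`-vertex. -/
def Straddles [DecidableEq V] {k : ℕ} (sup : Fin k → List V) (A S : Set V) : Prop :=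
  (∃ i, ∃ u ∈ A, u ∈ sup i ∧ ∃ s ∈ S, s ∈ sup i ∧
      (sup i).idxOf u < (sup i).idxOf s) ∧
  (∃ j, ∃ v ∈ A, v ∈ sup j ∧ ∃ s ∈ S, s ∈ sup j ∧
      (sup j).idxOf s < (sup j).idxOf v)

/-- `IsBridgeAttach G PiV pedges Γ A` : `Γ` is a bridge of the path system with vertex set
`PiV` and edge lists `pedges i`, and `A` is its attachment set.  A bridge is either a
connected component of `G \ PiV` (attachments: its neighborhood), or an edge of `G` not on
any of the paths but with both endpoints on the paths (attachments: its two endpoints). -/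
def IsBridgeAttach (G : SimpleGraph V) {k : ℕ} (PiV : Set V)
    (pedges : Fin k → List (Sym2 V)) (Γ A : Set V) : Prop :=
  (IsComp G PiV Γ ∧ A = {v | v ∉ Γ ∧ ∃ u ∈ Γ, G.Adj u v}) ∨
  (∃ u v, G.Adj u v ∧ u ∈ PiV ∧ v ∈ PiV ∧ (∀ i, s(u, v) ∉ pedges i) ∧
    Γ = {u, v} ∧ A = {u, v})

/-!
If a bridge `Γ` straddled `S`, then on some path `πᵢ` an attachment `u` precedes the unique
`S`-vertex of `πᵢ`, so the initial segment of `πᵢ` joins `x` to `u` in `G \ S`; on some path `πⱼ`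
an attachment `v` follows the `S`-vertex of `πⱼ`, so the final segment of `πⱼ` joins `v` to a
vertex of `C` in `G \ S`. The `k` paths meet `S` in `k` distinct vertices, so `S` lies on `Π` and
the bridge joins `u` to `v` inside `G \ S`. Hence `x` would lie in `C`.
-/

theorem List.idxOf_lt_of_mem_take {α : Type*} [DecidableEq α] {l : List α} {n : ℕ} {a : α}
    (h : a ∈ l.take n) : l.idxOf a < n := by
  rw [← l.take_append_drop n, List.idxOf_append_of_mem h]
  exact (List.idxOf_lt_length_of_mem h).trans_le (List.length_take_le n l)

theorem List.Nodup.le_idxOf_of_mem_drop {α : Type*} [DecidableEq α] {l : List α} {n : ℕ} {a : α}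
    (hl : l.Nodup) (h : a ∈ l.drop n) : n ≤ l.idxOf a := by
  by_contra! hlt
  have hmem : a ∈ l.take n := by
    have hlen := List.idxOf_lt_length_of_mem (List.mem_of_mem_drop h)
    rw [List.mem_iff_getElem]
    exact ⟨l.idxOf a, by simp [hlt, hlen], by simp⟩
  exact List.disjoint_take_drop hl le_rfl hmem h

theorem Set.eq_of_mem_of_ncard_eq_one {α : Type*} {s : Set α} (hs : s.ncard = 1) {a b : α}
    (ha : a ∈ s) (hb : b ∈ s) : a = b := by
  obtain ⟨c, rfl⟩ := Set.ncard_eq_one.mp hs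
  exact ha.trans hb.symm

section delAdj

variable {G : SimpleGraph V} {S : Set V}

theorem delAdj_anti {T : Set V} (h : S ⊆ T) : delAdj G T ≤ delAdj G S :=
  fun _ _ huv => ⟨huv.1, fun hs => huv.2.1 (h hs), fun hs => huv.2.2 (h hs)⟩

theorem SimpleGraph.Walk.reachable_delAdj {a b : V} (w : G.Walk a b)
    (h : ∀ v ∈ w.support, v ∉ S) : (delAdj G S).Reachable a b := by
  induction w with
  | nil => rfl
  | cons hadj q ih =>
    refine (Adj.reachable ?_).trans (ih fun v hv => h v (by simp [hv]))
    exact ⟨hadj, h _ (by simp), h _ (by simp)⟩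

theorem eq_of_reachable_delAdj_of_mem {a b : V} (h : (delAdj G S).Reachable a b)
    (hb : b ∈ S) : a = b := by
  obtain ⟨w⟩ := h
  induction w with
  | nil => rfl
  | cons hadj q ih => exact absurd hb (ih hb ▸ hadj.2.2)

end delAdj

namespace IsComp

variable {G : SimpleGraph V} {S C : Set V}

theorem notMem (hC : IsComp G S C) {c : V} (hc : c ∈ C) : c ∉ S := by
  obtain ⟨v, hv, rfl⟩ := hC
  exact fun hcS => hv (eq_of_reachable_delAdj_of_mem hc hcS ▸ hcS)

theorem reachable (hC : IsComp G S C) {a b : V} (ha : a ∈ C) (hb : b ∈ C) :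
    (delAdj G S).Reachable a b := by
  obtain ⟨v, -, rfl⟩ := hC
  exact (ha : (delAdj G S).Reachable v a).symm.trans hb

theorem mem_of_reachable (hC : IsComp G S C) {a b : V} (ha : a ∈ C)
    (hab : (delAdj G S).Reachable a b) : b ∈ C := by
  obtain ⟨v, -, rfl⟩ := hC
  exact (ha : (delAdj G S).Reachable v a).trans hab

end IsComp

namespace SimpleGraph.Walk

variable [DecidableEq V] {G : SimpleGraph V} {S : Set V} {a b s : V}

theorem idxOf_le_of_mem_support_takeUntil (p : G.Walk a b) {u w : V} (hu : u ∈ p.support)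
    (hw : w ∈ (p.takeUntil u hu).support) : p.support.idxOf w ≤ p.support.idxOf u := by
  rw [takeUntil_eq_take, support_copy, support_take] at hw
  exact Nat.lt_succ_iff.mp (List.idxOf_lt_of_mem_take hw)

theorem IsPath.idxOf_le_of_mem_support_dropUntil {p : G.Walk a b} (hp : p.IsPath) {v w : V}
    (hv : v ∈ p.support) (hw : w ∈ (p.dropUntil v hv).support) :
    p.support.idxOf v ≤ p.support.idxOf w := by
  rw [dropUntil_eq_drop, support_copy, drop_support_eq_support_drop_min] at hw
  have hvlen : p.support.idxOf v ≤ p.length := by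
    simpa [← length_takeUntil p hv] using length_takeUntil_le_length p hv
  rw [min_eq_left hvlen] at hw
  exact hp.support_nodup.le_idxOf_of_mem_drop hw

theorem support_takeUntil_disjoint_of_idxOf_lt (p : G.Walk a b)
    (hS : ∀ w ∈ S, w ∈ p.support → w = s) {u : V} (hu : u ∈ p.support)
    (hus : p.support.idxOf u < p.support.idxOf s) :
    ∀ w ∈ (p.takeUntil u hu).support, w ∉ S := by
  intro w hw hwS
  have := p.idxOf_le_of_mem_support_takeUntil hu hw
  rw [hS w hwS (p.support_takeUntil_subset_support hu hw)] at this
  omega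

theorem IsPath.support_dropUntil_disjoint_of_idxOf_lt {p : G.Walk a b} (hp : p.IsPath)
    (hS : ∀ w ∈ S, w ∈ p.support → w = s) {v : V} (hv : v ∈ p.support)
    (hsv : p.support.idxOf s < p.support.idxOf v) :
    ∀ w ∈ (p.dropUntil v hv).support, w ∉ S := by
  intro w hw hwS
  have := hp.idxOf_le_of_mem_support_dropUntil hv hw
  rw [hS w hwS (p.support_dropUntil_subset_support hv hw)] at this
  omega

end SimpleGraph.Walk

theorem IsBridgeAttach.reachable_delAdj {G : SimpleGraph V} {k : ℕ} {P S Γ A : Set V}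
    {pedges : Fin k → List (Sym2 V)} (hΓ : IsBridgeAttach G P pedges Γ A) (hSP : S ⊆ P)
    {u v : V} (hu : u ∈ A) (hv : v ∈ A) (huS : u ∉ S) (hvS : v ∉ S) :
    (delAdj G S).Reachable u v := by
  rcases hΓ with ⟨hΓ, rfl⟩ | ⟨a, b, hab, -, -, -, -, rfl⟩
  · obtain ⟨-, a, ha, hau⟩ := hu
    obtain ⟨-, b, hb, hbv⟩ := hv
    have haS : a ∉ S := fun h => hΓ.notMem ha (hSP h)
    have hbS : b ∉ S := fun h => hΓ.notMem hb (hSP h)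
    have hab : (delAdj G S).Reachable a b := (hΓ.reachable ha hb).mono (delAdj_anti hSP)
    have hua : (delAdj G S).Adj u a := ⟨hau.symm, huS, haS⟩
    have hbv' : (delAdj G S).Adj b v := ⟨hbv, hbS, hvS⟩
    exact hua.reachable.trans (hab.trans hbv'.reachable)
  · rcases hu with rfl | rfl <;> rcases hv with rfl | rfl
    · exact Reachable.refl _
    · exact Adj.reachable (show (delAdj G S).Adj u v from ⟨hab, huS, hvS⟩)
    · exact Adj.reachable (show (delAdj G S).Adj u v from ⟨hab.symm, huS, hvS⟩)
    · exact Reachable.refl _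

theorem subset_support_of_ncard_inter_support_eq_one {G : SimpleGraph V} {k : ℕ} {S : Set V}
    {x : V} {ends : Fin k → V} {p : ∀ i, G.Walk x (ends i)}
    (hdisj : ∀ i j, i ≠ j → ∀ v, v ∈ (p i).support → v ∈ (p j).support →
      v = x ∨ (v = ends i ∧ v = ends j))
    (hone : ∀ i, (S ∩ {v | v ∈ (p i).support}).ncard = 1)
    (hx : x ∉ S) (hends : ∀ i, ends i ∉ S) (hSfin : S.Finite) (hSk : S.ncard = k) :
    S ⊆ {v | ∃ i, v ∈ (p i).support} := by
  choose s hs using fun i => Set.ncard_eq_one.mp (hone i)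
  have hsmem : ∀ i, s i ∈ S ∧ s i ∈ (p i).support := fun i =>
    show s i ∈ S ∩ {v | v ∈ (p i).support} from (hs i) ▸ rfl
  have hinj : Function.Injective s := by
    intro i j hij
    by_contra hne
    rcases hdisj i j hne _ (hsmem i).2 (hij ▸ (hsmem j).2) with h | ⟨h, -⟩
    · exact hx (h ▸ (hsmem i).1)
    · exact hends i (h ▸ (hsmem i).1)
  have hrange : Set.range s = S := by
    refine Set.eq_of_subset_of_ncard_le (Set.range_subset_iff.2 fun i => (hsmem i).1) ?_ hSfin
    rw [Set.ncard_range_of_injective hinj, Nat.card_eq_fintype_card, Fintype.card_fin, hSk]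
  rw [← hrange]
  rintro _ ⟨i, rfl⟩
  exact ⟨i, (hsmem i).2⟩

theorem stmt_9_general [DecidableEq V] (G : SimpleGraph V) (k : ℕ)
    (S : Set V) (hS : IsShredder G k S)
    (C : Set V) (hC : IsComp G S C)
    (x : V) (hx : x ∉ S) (hxC : x ∉ C)
    (ends : Fin k → V) (hends : ∀ i, ends i ∈ C)
    (p : ∀ i, G.Walk x (ends i)) (hp : ∀ i, (p i).IsPath)
    (hdisj : ∀ i j, i ≠ j → ∀ v, v ∈ (p i).support → v ∈ (p j).support →
      v = x ∨ (v = ends i ∧ v = ends j))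
    (hone : ∀ i, (S ∩ {v | v ∈ (p i).support}).ncard = 1) :
    ∀ Γ A,
      IsBridgeAttach G {v | ∃ i, v ∈ (p i).support} (fun i => (p i).edges) Γ A →
        ¬ Straddles (fun i => (p i).support) A S := by
  rintro Γ A hΓ ⟨⟨i, u, huA, hu, s, hsS, hs, hus⟩, ⟨j, v, hvA, hv, s', hs'S, hs', hs'v⟩⟩
  have honly : ∀ i t, t ∈ S → t ∈ (p i).support → ∀ w ∈ S, w ∈ (p i).support → w = t :=
    fun i t ht ht' w hw hw' => Set.eq_of_mem_of_ncard_eq_one (hone i) ⟨hw, hw'⟩ ⟨ht, ht'⟩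
  -- `Set.ncard` is `0` on infinite sets, and `i : Fin k` forces `k ≠ 0`.
  have hSfin : S.Finite := Set.finite_of_ncard_ne_zero (hS.1 ▸ i.pos.ne')
  have hSpaths := subset_support_of_ncard_inter_support_eq_one hdisj hone hx
    (fun i => hC.notMem (hends i)) hSfin hS.1
  have hpre := (p i).support_takeUntil_disjoint_of_idxOf_lt (honly i s hsS hs) hu hus
  have hsuf := (hp j).support_dropUntil_disjoint_of_idxOf_lt (honly j s' hs'S hs') hv hs'v
  have huv := hΓ.reachable_delAdj hSpaths huA hvA (hpre u (Walk.end_mem_support _))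
    (hsuf v (Walk.start_mem_support _))
  have hxe : (delAdj G S).Reachable x (ends j) :=
    (Walk.reachable_delAdj _ hpre).trans (huv.trans (Walk.reachable_delAdj _ hsuf))
  exact hxC (hC.mem_of_reachable (hends j) hxe.symm)

/-- if a `k`-shredder `S` is captured — `x` lies in a component of `G \ S` other
than the largest-volume component `C`, and `Π` is a family of `k` openly-disjoint paths from
`x` ending in `C` — then no bridge of `Π` straddles `S`. -/
theorem stmt_9 [Fintype V] [DecidableEq V] (G : SimpleGraph V) (k : ℕ)
    (hG : KConnected G k) (S : Set V) (hS : IsShredder G k S)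
    (C : Set V) (hC : IsComp G S C) (hCmax : ∀ C', IsComp G S C' → vol G C' ≤ vol G C)
    (x : V) (hx : x ∉ S) (hxC : x ∉ C)
    (ends : Fin k → V) (hends : ∀ i, ends i ∈ C)
    (p : ∀ i, G.Walk x (ends i)) (hp : ∀ i, (p i).IsPath)
    (hdisj : ∀ i j, i ≠ j → ∀ v, v ∈ (p i).support → v ∈ (p j).support →
      v = x ∨ (v = ends i ∧ v = ends j))
    (hone : ∀ i, (S ∩ {v | v ∈ (p i).support}).ncard = 1) :
    ∀ Γ A,
      IsBridgeAttach G {v | ∃ i, v ∈ (p i).support} (fun i => (p i).edges) Γ A →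
        ¬ Straddles (fun i => (p i).support) A S :=
  stmt_9_general G k S hS C hC x hx hxC ends hends p hp hdisj hone
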